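/- Consider the network Σ(m) of classical conditioning gates with unit training time s, state X(t) = X̄ with X̄ ∈ {YES, OR}^n arbitrary, and a node (p,q). Applying the constant input sequence U(τ) = Û_{(p,q)} for τ = t, t+1, ..., t+s−1 yields x_{pq}(t+s) = x̄_{pq}(t) (the flipped value), and x_{ij}(t+s) = x_{ij}(t) for every node (i,j) with i ≤ p and (i,j) ≠ (p,q); that is, the flip of node (p,q) preserves the states of all other nodes in layer p and in all upstream layers 1, ..., p−1. -/

import Mathlib

/-- The state of a classical conditioning gate: logical YES or logical OR. -/
inductive GateState : Type
  | YES : GateState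
  | OR  : GateState
  deriving DecidableEq, Repr

/-- Output of a single classical conditioning gate:
`y = v` when the state is YES, and `y = v ∨ w` when the state is OR. -/
def gateOut : GateState → Bool → Bool → Bool
  | GateState.YES, v, _ => v
  | GateState.OR,  v, w => v || w

open Classical in
/-- A trajectory of a single classical conditioning gate with unit training time `s`,
inputs `v w : ℕ → Bool`, state `x : ℕ → GateState`, and output `y : ℕ → Bool`:
the output equation and the state-update equation of the model. -/
def GateTraj (s : ℕ) (v w : ℕ → Bool) (x : ℕ → GateState) (y : ℕ → Bool) : Prop :=
  (∀ t : ℕ, y t = gateOut (x t) (v t) (w t)) ∧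
  (∀ t : ℕ, x (t + 1) =
    if x (t + 1 - s) = GateState.YES ∧
        (∀ τ ∈ Finset.Icc (t + 1 - s) t, v τ = true ∧ w τ = true) then
      GateState.OR
    else if x (t + 1 - s) = GateState.OR ∧
        (∀ τ ∈ Finset.Icc (t + 1 - s) t, v τ = false ∧ w τ = true) then
      GateState.YES
    else
      x t)

/-- Output of node `(i,j)` of the binary-tree network `Σ(m)` of classical
conditioning gates, given the snapshot `X` of the gate states (`X i j` is the
state of node `(i,j)`, indices 1-based) and the external input `U` (1-based
ports: `v₁ⱼ = U (2j-1)`, `w₁ⱼ = U (2j)`).  Layer `0` is, by convention, the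
external ports themselves: `netY X U 0 k = U k`. -/
def netY (X : ℕ → ℕ → GateState) (U : ℕ → Bool) : ℕ → ℕ → Bool
  | 0, j => U j
  | i + 1, j => gateOut (X (i + 1) j) (netY X U i (2 * j - 1)) (netY X U i (2 * j))

/-- First input `v_{ij}` of node `(i,j)`: the output of node `(i-1, 2j-1)`
(for `i = 1`, the external port `2j-1`). -/
def nodeV (X : ℕ → ℕ → GateState) (U : ℕ → Bool) (i j : ℕ) : Bool :=
  netY X U (i - 1) (2 * j - 1)

/-- Second input `w_{ij}` of node `(i,j)`: the output of node `(i-1, 2j)`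
(for `i = 1`, the external port `2j`). -/
def nodeW (X : ℕ → ℕ → GateState) (U : ℕ → Bool) (i j : ℕ) : Bool :=
  netY X U (i - 1) (2 * j)

open Classical in
/-- A trajectory of the network `Σ(m)` of classical conditioning gates, all with
unit training time `s`: `U t k` is the external input at time `t` on port `k`
(`k = 1, …, 2^m`), and `X t i j` is the state of node `(i,j)` at time `t`
(`i = 1, …, m`, `j = 1, …, 2^(m-i)`).  Every node obeys the state-update
equation of the classical conditioning gate, its inputs being delivered by the
outputs of the previous layer (resp. the external input, for layer 1). -/
def NetTraj (m s : ℕ) (U : ℕ → ℕ → Bool) (X : ℕ → ℕ → ℕ → GateState) : Prop :=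
  ∀ i j : ℕ, 1 ≤ i → i ≤ m → 1 ≤ j → j ≤ 2 ^ (m - i) →
    ∀ t : ℕ, X (t + 1) i j =
      if X (t + 1 - s) i j = GateState.YES ∧
          (∀ τ ∈ Finset.Icc (t + 1 - s) t,
            nodeV (X τ) (U τ) i j = true ∧ nodeW (X τ) (U τ) i j = true) then
        GateState.OR
      else if X (t + 1 - s) i j = GateState.OR ∧
          (∀ τ ∈ Finset.Icc (t + 1 - s) t,
            nodeV (X τ) (U τ) i j = false ∧ nodeW (X τ) (U τ) i j = true) then
        GateState.YES
      else
        X t i j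

/-- The flipped value of a gate state. -/
def flipState : GateState → GateState
  | GateState.YES => GateState.OR
  | GateState.OR  => GateState.YES

/-- The training input value `Û_{(p,q)}` for flipping node `(p,q)` whose current
state is `xpq`: the external input (1-based ports `1, …, 2^m`) is divided into
`2^(m+1-p)` consecutive blocks of equal size `2^(p-1)`; block `2q-1` is
`(0,…,0)` if `xpq = OR` and `(1,0,…,0)` if `xpq = YES`, block `2q` is
`(1,0,…,0)`, and all other blocks are `(0,…,0)`. -/
def Uhat (p q : ℕ) (xpq : GateState) (k : ℕ) : Bool :=
  if (k - 1) / 2 ^ (p - 1) + 1 = 2 * q - 1 then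
    decide (xpq = GateState.YES) && decide ((k - 1) % 2 ^ (p - 1) = 0)
  else if (k - 1) / 2 ^ (p - 1) + 1 = 2 * q then
    decide ((k - 1) % 2 ^ (p - 1) = 0)
  else
    false



/-! Under `Û_{(p,q)}` only the first port of a block of size `2^(p-1)` can carry a `1`, and the
right subtree of a node in a layer below `p` starts strictly inside such a block. So every gate
below layer `p` sees `w = 0` and, whatever its state, outputs the first port of its subtree.
Consequently a node `(i,j)` with `i ≤ p` has `w = 1` exactly when it is `(p,q)`: all other such
nodes cannot train, while `(p,q)` sees `(v,w) = (1,1)` or `(0,1)` for `s` steps according as it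
is YES or OR, and flips. -/

lemma gateOut_false (x : GateState) (v : Bool) : gateOut x v false = v := by
  cases x <;> simp [gateOut]

lemma two_pow_mul_le_two_pow {i j m : ℕ} (hi : i ≤ m) (hj : j ≤ 2 ^ (m - i)) :
    2 ^ i * j ≤ 2 ^ m :=
  (Nat.mul_le_mul_left _ hj).trans (by rw [← pow_add, Nat.add_sub_cancel' hi])

lemma two_pow_mul_odd_mod_ne_zero {a b : ℕ} (h : a < b) (c : ℕ) :
    2 ^ a * (2 * c + 1) % 2 ^ b ≠ 0 := by
  intro h0
  have hcop : Nat.Coprime (2 ^ b) (2 * c + 1) :=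
    (Nat.coprime_two_left.2 (odd_two_mul_add_one c)).pow_left b
  have hdvd : 2 ^ b ∣ 2 ^ a := hcop.dvd_of_dvd_mul_right (Nat.dvd_of_mod_eq_zero h0)
  exact absurd ((Nat.pow_dvd_pow_iff_le_right (by norm_num)).1 hdvd) (by omega)

section Uhat

variable {p q : ℕ} {x : GateState}

lemma Uhat_eq_false_of_mod_ne_zero {k : ℕ} (h : (k - 1) % 2 ^ (p - 1) ≠ 0) :
    Uhat p q x k = false := by
  simp only [Uhat]
  split_ifs <;> simp [h]

lemma Uhat_block_start (b : ℕ) :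
    Uhat p q x (2 ^ (p - 1) * b + 1) =
      if b + 1 = 2 * q - 1 then decide (x = GateState.YES) else decide (b + 1 = 2 * q) := by
  simp only [Uhat, Nat.add_sub_cancel, Nat.mul_div_cancel_left _ (Nat.two_pow_pos _),
    Nat.mul_mod_right]
  split_ifs <;> simp_all

lemma Uhat_two_pow_mul_odd_eq_false {i : ℕ} (hi : i + 1 < p) (c : ℕ) :
    Uhat p q x (2 ^ i * (2 * c + 1) + 1) = false :=
  Uhat_eq_false_of_mod_ne_zero (by simpa using two_pow_mul_odd_mod_ne_zero (by omega) c)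

end Uhat

section TrainingInput

variable {m p q : ℕ} {x : GateState} {X : ℕ → ℕ → GateState} {U : ℕ → Bool}

lemma netY_eq_Uhat {i : ℕ} (hi : i < p) {j : ℕ}
    (hU : ∀ k, 2 ^ i * j < k → k ≤ 2 ^ i * (j + 1) → U k = Uhat p q x k) :
    netY X U i (j + 1) = Uhat p q x (2 ^ i * j + 1) := by
  induction i generalizing j with
  | zero => simpa [netY] using hU (j + 1) (by simp) (by simp)
  | succ i ih =>
    have hsplit : 2 ^ (i + 1) * j = 2 ^ i * (2 * j) := by ring
    have hend : 2 ^ i * (2 * j + 1 + 1) = 2 ^ (i + 1) * (j + 1) := by ring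
    have hmono : 2 ^ i * (2 * j) ≤ 2 ^ i * (2 * j + 1) := Nat.mul_le_mul_left _ (by omega)
    have hmono' : 2 ^ i * (2 * j + 1) ≤ 2 ^ i * (2 * j + 1 + 1) := Nat.mul_le_mul_left _ (by omega)
    have hleft := ih (by omega) (j := 2 * j) fun k hk hk' => hU k (by omega) (by omega)
    have hright := ih (by omega) (j := 2 * j + 1) fun k hk hk' => hU k (by omega) (by omega)
    rw [Uhat_two_pow_mul_odd_eq_false hi] at hright
    rw [netY, show 2 * (j + 1) - 1 = 2 * j + 1 by omega, show 2 * (j + 1) = 2 * j + 1 + 1 by ring,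
      hleft, hright, gateOut_false, hsplit]

lemma nodeW_eq_decide (hU : ∀ k, 1 ≤ k → k ≤ 2 ^ m → U k = Uhat p q x k) {i j : ℕ}
    (hi : 1 ≤ i) (hip : i ≤ p) (hpm : p ≤ m) (hj : 1 ≤ j) (hjm : j ≤ 2 ^ (m - i)) :
    nodeW X U i j = decide ((i, j) = (p, q)) := by
  obtain ⟨i, rfl⟩ : ∃ i', i = i' + 1 := ⟨i - 1, by omega⟩
  obtain ⟨j, rfl⟩ : ∃ j', j = j' + 1 := ⟨j - 1, by omega⟩
  have hend : 2 ^ i * (2 * j + 1 + 1) = 2 ^ (i + 1) * (j + 1) := by ring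
  have hsub : 2 ^ (i + 1) * (j + 1) ≤ 2 ^ m := two_pow_mul_le_two_pow (by omega) hjm
  have hmono : 2 ^ i * (2 * j + 1) ≤ 2 ^ i * (2 * j + 1 + 1) := Nat.mul_le_mul_left _ (by omega)
  have hw : nodeW X U (i + 1) (j + 1) = Uhat p q x (2 ^ i * (2 * j + 1) + 1) := by
    rw [nodeW, Nat.add_sub_cancel, show 2 * (j + 1) = 2 * j + 1 + 1 by ring]
    exact netY_eq_Uhat (by omega) fun k hk hk' => hU k (by omega) (by omega)
  rcases hip.lt_or_eq with hlt | rfl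
  · rw [hw, Uhat_two_pow_mul_odd_eq_false hlt, eq_comm, decide_eq_false_iff_not, Prod.mk.injEq]
    omega
  · have hblock := Uhat_block_start (p := i + 1) (q := q) (x := x) (2 * j + 1)
    rw [Nat.add_sub_cancel] at hblock
    rw [hw, hblock, if_neg (by omega), decide_eq_decide, Prod.mk.injEq]
    omega

lemma nodeV_eq_decide (hU : ∀ k, 1 ≤ k → k ≤ 2 ^ m → U k = Uhat p q x k)
    (hp : 1 ≤ p) (hpm : p ≤ m) (hq : 1 ≤ q) (hqm : q ≤ 2 ^ (m - p)) :
    nodeV X U p q = decide (x = GateState.YES) := by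
  obtain ⟨q, rfl⟩ : ∃ q', q = q' + 1 := ⟨q - 1, by omega⟩
  have hsub : 2 ^ p * (q + 1) ≤ 2 ^ m := two_pow_mul_le_two_pow hpm hqm
  have hend : 2 ^ (p - 1) * (2 * q + 1 + 1) = 2 ^ p * (q + 1) := by
    rw [← Nat.sub_add_cancel hp, pow_succ, Nat.add_sub_cancel]; ring
  have hmono : 2 ^ (p - 1) * (2 * q + 1) ≤ 2 ^ (p - 1) * (2 * q + 1 + 1) :=
    Nat.mul_le_mul_left _ (by omega)
  rw [nodeV, show 2 * (q + 1) - 1 = 2 * q + 1 by omega,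
    netY_eq_Uhat (by omega) fun k hk hk' => hU k (by omega) (by omega),
    Uhat_block_start, if_pos (by omega)]

end TrainingInput

namespace NetTraj

variable {m s : ℕ} {U : ℕ → ℕ → Bool} {X : ℕ → ℕ → ℕ → GateState} {i j : ℕ}

lemma succ_eq_of_nodeW_eq_false (h : NetTraj m s U X) (hs : 1 ≤ s) (hi : 1 ≤ i) (him : i ≤ m)
    (hj : 1 ≤ j) (hjm : j ≤ 2 ^ (m - i)) {τ : ℕ} (hw : nodeW (X τ) (U τ) i j = false) :
    X (τ + 1) i j = X τ i j := by
  have hτ : τ ∈ Finset.Icc (τ + 1 - s) τ := Finset.mem_Icc.2 ⟨by omega, le_rfl⟩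
  rw [h i j hi him hj hjm τ, if_neg, if_neg] <;>
    exact fun ⟨_, hall⟩ => by simpa [hw] using (hall τ hτ).2

lemma eq_of_nodeW_eq_false (h : NetTraj m s U X) (hs : 1 ≤ s) (hi : 1 ≤ i) (him : i ≤ m)
    (hj : 1 ≤ j) (hjm : j ≤ 2 ^ (m - i)) {t n : ℕ}
    (hw : ∀ r < n, nodeW (X (t + r)) (U (t + r)) i j = false) :
    X (t + n) i j = X t i j := by
  induction n with
  | zero => rfl
  | succ n ih =>
    rw [← add_assoc, h.succ_eq_of_nodeW_eq_false hs hi him hj hjm (hw n n.lt_succ_self),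
      ih fun r hr => hw r (by omega)]

lemma eq_flipState (h : NetTraj m s U X) (hs : 1 ≤ s) (hi : 1 ≤ i) (him : i ≤ m)
    (hj : 1 ≤ j) (hjm : j ≤ 2 ^ (m - i)) {t : ℕ}
    (hv : ∀ r < s, nodeV (X (t + r)) (U (t + r)) i j = decide (X t i j = GateState.YES))
    (hw : ∀ r < s, nodeW (X (t + r)) (U (t + r)) i j = true) :
    X (t + s) i j = flipState (X t i j) := by
  obtain ⟨s, rfl⟩ : ∃ s', s = s' + 1 := ⟨s - 1, by omega⟩
  have hinputs : ∀ τ ∈ Finset.Icc t (t + s), nodeV (X τ) (U τ) i j =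
      decide (X t i j = GateState.YES) ∧ nodeW (X τ) (U τ) i j = true := by
    intro τ hτ
    have hτ' := Finset.mem_Icc.1 hτ
    obtain ⟨r, hr, rfl⟩ : ∃ r, r < s + 1 ∧ τ = t + r := ⟨τ - t, by omega, by omega⟩
    exact ⟨hv r hr, hw r hr⟩
  rw [← add_assoc, h i j hi him hj hjm, show t + s + 1 - (s + 1) = t by omega]
  cases hx : X t i j <;> simp_all [flipState]

end NetTraj

theorem stmt10_general (m s : ℕ) (hs : 1 ≤ s) (p q : ℕ)
    (hp : 1 ≤ p) (hpm : p ≤ m) (hq : 1 ≤ q) (hqn : q ≤ 2 ^ (m - p))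
    (U : ℕ → ℕ → Bool) (X : ℕ → ℕ → ℕ → GateState)
    (hnet : NetTraj m s U X) (t : ℕ)
    (hU : ∀ r : ℕ, r < s → ∀ k : ℕ, 1 ≤ k → k ≤ 2 ^ m →
      U (t + r) k = Uhat p q (X t p q) k) :
    X (t + s) p q = flipState (X t p q) ∧
    ∀ i j : ℕ, 1 ≤ i → i ≤ p → 1 ≤ j → j ≤ 2 ^ (m - i) → (i, j) ≠ (p, q) →
      X (t + s) i j = X t i j := by
  refine ⟨hnet.eq_flipState hs hp hpm hq hqn
    (fun r hr => nodeV_eq_decide (hU r hr) hp hpm hq hqn) (fun r hr => ?_), ?_⟩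
  · rw [nodeW_eq_decide (hU r hr) hp le_rfl hpm hq hqn, decide_eq_true rfl]
  · intro i j hi hip hj hjm hne
    exact hnet.eq_of_nodeW_eq_false hs hi (hip.trans hpm) hj hjm fun r hr => by
      rw [nodeW_eq_decide (hU r hr) hi hip hpm hj hjm, decide_eq_false hne]

/-- for the network `Σ(m)` with unit training time `s ≥ 1`,
arbitrary state at an arbitrary time `t`, and any node `(p,q)`, applying the
constant input sequence `U(τ) = Û_{(p,q)}` for `τ = t, t+1, …, t+s-1` flips the
state of node `(p,q)` at time `t+s` while preserving the state of every node
`(i,j)` with `i ≤ p` and `(i,j) ≠ (p,q)` (all other nodes of layer `p` and all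
nodes of the upstream layers `1, …, p-1`). -/
theorem stmt10 (m s : ℕ) (hm : 1 ≤ m) (hs : 1 ≤ s) (p q : ℕ)
    (hp : 1 ≤ p) (hpm : p ≤ m) (hq : 1 ≤ q) (hqn : q ≤ 2 ^ (m - p))
    (U : ℕ → ℕ → Bool) (X : ℕ → ℕ → ℕ → GateState)
    (hnet : NetTraj m s U X) (t : ℕ)
    (hU : ∀ r : ℕ, r < s → ∀ k : ℕ, 1 ≤ k → k ≤ 2 ^ m →
      U (t + r) k = Uhat p q (X t p q) k) :
    X (t + s) p q = flipState (X t p q) ∧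
    ∀ i j : ℕ, 1 ≤ i → i ≤ p → 1 ≤ j → j ≤ 2 ^ (m - i) → (i, j) ≠ (p, q) →
      X (t + s) i j = X t i j :=
  stmt10_general m s hs p q hp hpm hq hqn U X hnet t hU
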